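/- arXiv:1902.03915 — 5 statements merged into one kernel-verified Lean document; each statement's English description precedes it below -/
import Mathlib

section
/- Ekeland's variational principle, free form: Let X be a complete metric space and let f : X → [0,∞] be a potential with supp(f) ≠ ∅. Then for every real ε > 0, f has an ε-critical point; that is, there exists x* ∈ X with f(x*) < ∞ such that for every y ∈ X, if f(y) + ε·d(x*, y) ≤ f(x*) then y = x*. -/
open ENNReal

/-- An `ε`-critical point of a potential `f : X → [0,∞]`: a point of the support of `f`
such that `f y + ε·d(x,y) ≤ f x` implies `y = x`. -/
def IsCritPt {X : Type*} [MetricSpace X] (f : X → ℝ≥0∞) (ε : ℝ) (x : X) : Prop :=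
  f x ≠ ⊤ ∧ ∀ y : X, f y + ENNReal.ofReal ε * edist x y ≤ f x → y = x

/-!
Starting from a point of the support, pick inductively `xₙ₊₁` in the Ekeland set
`S xₙ = {y | f y + c·d(xₙ, y) ≤ f xₙ}` with `f xₙ₊₁` within `c·2⁻ⁿ` of the infimum of `f` on
`S xₙ`. The sets `S xₙ` are closed and nested, and near-minimality forces `S xₙ₊₁` into the ball of
radius `2⁻ⁿ` around `xₙ₊₁`, so by completeness they meet in a point `z`. That point is itself
near-minimal on every `S xₙ`, which squeezes `S z` down to `{z}`.
-/

open Filter Topology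

theorem Set.Nonempty.exists_forall_le_add {α : Type*} {s : Set α} (hs : s.Nonempty)
    (f : α → ℝ≥0∞) {δ : ℝ≥0∞} (hδ : δ ≠ 0) : ∃ q ∈ s, ∀ y ∈ s, f q ≤ f y + δ := by
  by_cases hinf : sInf (f '' s) = ⊤
  · obtain ⟨q, hq⟩ := hs
    refine ⟨q, hq, fun y hy => ?_⟩
    rw [sInf_eq_top.mp hinf (f y) ⟨y, hy, rfl⟩, top_add]
    exact le_top
  · obtain ⟨_, ⟨q, hq, rfl⟩, hlt⟩ := sInf_lt_iff.mp (ENNReal.lt_add_right hinf hδ)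
    exact ⟨q, hq, fun y hy => hlt.le.trans (by gcongr; exact sInf_le ⟨y, hy, rfl⟩)⟩

theorem exists_forall_mem_of_antitone_of_edist_le {X : Type*} [PseudoEMetricSpace X]
    [CompleteSpace X] {T : ℕ → Set X} {x : ℕ → X} {r : ℕ → ℝ≥0∞} (hT : Antitone T)
    (hT_closed : ∀ n, IsClosed (T n)) (hx : ∀ n, x n ∈ T n) (hr : Tendsto r atTop (𝓝 0))
    (hT_ball : ∀ n, ∀ y ∈ T n, edist (x n) y ≤ r n) : ∃ z, ∀ n, z ∈ T n := by
  have hx_mem : ∀ n m, n ≤ m → x m ∈ T n := fun n m hnm => hT hnm (hx m)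
  have hcauchy : CauchySeq x := by
    refine EMetric.cauchySeq_iff'.mpr fun ε hε => ?_
    obtain ⟨N, hN⟩ := (hr.eventually (gt_mem_nhds hε)).exists
    refine ⟨N, fun n hn => ?_⟩
    rw [edist_comm]
    exact (hT_ball N (x n) (hx_mem N n hn)).trans_lt hN
  obtain ⟨z, hz⟩ := cauchySeq_tendsto_of_complete hcauchy
  exact ⟨z, fun n => (hT_closed n).mem_of_tendsto hz (eventually_atTop.mpr ⟨n, hx_mem n⟩)⟩

section EkelandSet

variable {X : Type*} [PseudoEMetricSpace X] (f : X → ℝ≥0∞) (c : ℝ≥0∞)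

def ekelandSet (p : X) : Set X := {y | f y + c * edist p y ≤ f p}

variable {f c}

theorem mem_ekelandSet_self (p : X) : p ∈ ekelandSet f c p := by
  simp [ekelandSet]

theorem le_of_mem_ekelandSet {p y : X} (hy : y ∈ ekelandSet f c p) : f y ≤ f p :=
  le_self_add.trans hy

theorem ekelandSet_subset_of_mem {p q : X} (hq : q ∈ ekelandSet f c p) :
    ekelandSet f c q ⊆ ekelandSet f c p := fun y hy =>
  calc f y + c * edist p y
      ≤ f y + c * (edist p q + edist q y) := by gcongr; exact edist_triangle p q y
    _ = (f y + c * edist q y) + c * edist p q := by ring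
    _ ≤ f q + c * edist p q := by gcongr; exact hy
    _ ≤ f p := hq

theorem isClosed_ekelandSet (hf : LowerSemicontinuous f) (hc : c ≠ ⊤) (p : X) :
    IsClosed (ekelandSet f c p) :=
  (hf.add ((ENNReal.continuous_const_mul hc).comp
    (continuous_const.edist continuous_id)).lowerSemicontinuous).isClosed_preimage (f p)

theorem mul_edist_le_of_mem_ekelandSet {p q y : X} {δ : ℝ≥0∞} (hq : q ∈ ekelandSet f c p)
    (hq_min : ∀ w ∈ ekelandSet f c p, f q ≤ f w + δ) (hfq : f q ≠ ⊤)
    (hy : y ∈ ekelandSet f c q) : c * edist q y ≤ δ := by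
  have hfy : f y ≠ ⊤ := ne_top_of_le_ne_top hfq (le_of_mem_ekelandSet hy)
  exact (ENNReal.add_le_add_iff_left hfy).mp
    (hy.trans (hq_min y (ekelandSet_subset_of_mem hq hy)))

end EkelandSet

theorem exists_ekelandSet_eq_singleton {X : Type*} [EMetricSpace X] [CompleteSpace X]
    {f : X → ℝ≥0∞} (hf : LowerSemicontinuous f) {c : ℝ≥0∞} (hc₀ : c ≠ 0) (hc : c ≠ ⊤)
    {x₀ : X} (hx₀ : f x₀ ≠ ⊤) : ∃ z ∈ ekelandSet f c x₀, ekelandSet f c z = {z} := by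
  have hδ : ∀ n : ℕ, c * 2⁻¹ ^ n ≠ 0 := fun n => mul_ne_zero hc₀ (by simp)
  choose next hnext hnext_min using fun (n : ℕ) (p : X) =>
    Set.Nonempty.exists_forall_le_add ⟨p, mem_ekelandSet_self p⟩ f (hδ n)
  let x : ℕ → X := fun n => Nat.rec x₀ next n
  let T : ℕ → Set X := fun n => ekelandSet f c (x n)
  have hT : Antitone T := antitone_nat_of_succ_le fun n => ekelandSet_subset_of_mem (hnext n (x n))
  have hfx : ∀ n, f (x n) ≠ ⊤ := fun n =>
    ne_top_of_le_ne_top hx₀ (le_of_mem_ekelandSet (hT n.zero_le (mem_ekelandSet_self _)))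
  have hcancel : ∀ {a : ℝ≥0∞} (n : ℕ), c * a ≤ c * 2⁻¹ ^ n → a ≤ 2⁻¹ ^ n := fun _ =>
    (ENNReal.mul_le_mul_iff_right hc₀ hc).mp
  obtain ⟨z, hz⟩ := exists_forall_mem_of_antitone_of_edist_le (T := fun n => T (n + 1))
    (x := fun n => x (n + 1)) (fun _ _ h => hT (Nat.succ_le_succ h))
    (fun _ => isClosed_ekelandSet hf hc _) (fun _ => mem_ekelandSet_self _)
    (ENNReal.tendsto_pow_atTop_nhds_zero_of_lt_one (by norm_num)) fun n _ hy => hcancel n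
      (mul_edist_le_of_mem_ekelandSet (hnext n (x n)) (hnext_min n (x n)) (hfx (n + 1)) hy)
  have hzT : ∀ n, z ∈ T n := fun n => hT n.le_succ (hz n)
  have hz_min : ∀ n, ∀ w ∈ T n, f z ≤ f w + c * 2⁻¹ ^ n := fun n w hw =>
    (le_of_mem_ekelandSet (hz n)).trans (hnext_min n (x n) w hw)
  have hfz : f z ≠ ⊤ := ne_top_of_le_ne_top hx₀ (le_of_mem_ekelandSet (hzT 0))
  refine ⟨z, hzT 0, Set.eq_singleton_iff_unique_mem.mpr ⟨mem_ekelandSet_self z, fun y hy => ?_⟩⟩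
  have hzy : ∀ n, edist z y ≤ 2⁻¹ ^ n := fun n =>
    hcancel n (mul_edist_le_of_mem_ekelandSet (hzT n) (hz_min n) hfz hy)
  exact (edist_eq_zero.mp (nonpos_iff_eq_zero.mp (ge_of_tendsto'
    (ENNReal.tendsto_pow_atTop_nhds_zero_of_lt_one (by norm_num)) hzy))).symm

/-- Ekeland's variational principle, free form. -/
theorem ekeland_free_variational_principle {X : Type*} [MetricSpace X] [CompleteSpace X]
    (f : X → ℝ≥0∞) (hf : LowerSemicontinuous f) (hsupp : ∃ x, f x ≠ ⊤)
    (ε : ℝ) (hε : 0 < ε) :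
    ∃ x : X, IsCritPt f ε x := by
  obtain ⟨x₀, hx₀⟩ := hsupp
  obtain ⟨z, hz, hz_crit⟩ := exists_ekelandSet_eq_singleton hf
    (ENNReal.ofReal_ne_zero_iff.mpr hε) ENNReal.ofReal_ne_top hx₀
  exact ⟨z, ne_top_of_le_ne_top hx₀ (le_of_mem_ekelandSet hz),
    fun y hy => Set.eq_of_mem_singleton (hz_crit ▸ hy)⟩
end

section
/- Let X be a metric space, let 0 < α < β be reals, let f : X → [0,∞] be a potential with supp(f) ≠ ∅, and suppose g : X → ℝ is a continuous function with g ≥ 0 such that g(x) = inf_{y ∈ X} (f(y) + β·d(x,y)) for every x ∈ X (the infimum taken in [0,∞] and finite). If x* ∈ X is an α-critical point of g, then f(x*) = g(x*) (so in particular f(x*) < ∞) and x* is an α-critical point of f. -/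
/-!
Since `g` is the `β`-envelope of `f`, it lies below `f`. If `g x < f x`, lower semicontinuity
keeps `f` above some `r > g x` on a ball of radius `ρ` around `x`, so any `y` almost realising
the infimum defining `g x` lies at distance at least `ρ`; the slack `(β - α) ρ` then gives
`g y + α d(x, y) < g x` with `y ≠ x`, contradicting `α`-criticality. Once `f x = g x`, every
`y` violating `α`-criticality of `f` also violates it for the minorant `g`.
-/

open ENNReal

def IsCritPtReal {X : Type*} [MetricSpace X] (g : X → ℝ) (ε : ℝ) (x : X) : Prop :=
  ∀ y : X, g y + ε * dist x y ≤ g x → y = x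

section Envelope

variable {X : Type*} [PseudoMetricSpace X] {f : X → ℝ≥0∞} {g : X → ℝ}

theorem iInf_add_mul_edist_le_self (f : X → ℝ≥0∞) (c : ℝ≥0∞) (x : X) :
    ⨅ y, f y + c * edist x y ≤ f x :=
  iInf_le_of_le x (by simp)

theorem ofReal_add_mul_dist_le (hgf : ∀ y, ENNReal.ofReal (g y) ≤ f y) {c : ℝ} (hc : 0 ≤ c)
    (x y : X) : ENNReal.ofReal (g y + c * dist x y) ≤ f y + ENNReal.ofReal c * edist x y := by
  rw [edist_dist, ← ENNReal.ofReal_mul hc]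
  exact ENNReal.ofReal_add_le.trans (by gcongr; exact hgf y)

theorem LowerSemicontinuous.exists_ne_add_mul_dist_lt_of_lt (hf : LowerSemicontinuous f)
    {α β : ℝ} (hβ : 0 ≤ β) (hαβ : α < β) (hgf : ∀ y, ENNReal.ofReal (g y) ≤ f y)
    {x : X} (hgx : 0 ≤ g x)
    (hinf : ⨅ y, f y + ENNReal.ofReal β * edist x y ≤ ENNReal.ofReal (g x))
    (hlt : ENNReal.ofReal (g x) < f x) : ∃ y, y ≠ x ∧ g y + α * dist x y < g x := by
  obtain ⟨r, -, hgr, hrf⟩ := ENNReal.lt_iff_exists_real_btwn.mp hlt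
  replace hgr : g x < r := (ENNReal.ofReal_lt_ofReal_iff'.mp hgr).1
  obtain ⟨ρ, hρ, hball⟩ := Metric.eventually_nhds_iff.mp (hf x _ hrf)
  set ε := min (r - g x) ((β - α) * ρ)
  have hε : 0 < ε := lt_min (by linarith) (by nlinarith)
  have hεr : ε ≤ r - g x := min_le_left _ _
  have hερ : ε ≤ (β - α) * ρ := min_le_right _ _
  have hgε : ENNReal.ofReal (g x) < ENNReal.ofReal (g x + ε) :=
    (ENNReal.ofReal_lt_ofReal_iff (by linarith)).mpr (by linarith)
  obtain ⟨y, hy⟩ : ∃ y, f y + ENNReal.ofReal β * edist x y < ENNReal.ofReal (g x + ε) :=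
    iInf_lt_iff.mp (hinf.trans_lt hgε)
  have hρy : ρ ≤ dist x y := by
    by_contra! hyx
    have : ENNReal.ofReal r < ENNReal.ofReal (g x + ε) :=
      ((hball (by rwa [dist_comm])).le.trans le_self_add).trans_lt hy
    linarith [(ENNReal.ofReal_lt_ofReal_iff'.mp this).1]
  have hgy : g y + β * dist x y < g x + ε :=
    (ENNReal.ofReal_lt_ofReal_iff'.mp ((ofReal_add_mul_dist_le hgf hβ x y).trans_lt hy)).1
  refine ⟨y, fun hyx => by rw [hyx, dist_self] at hρy; linarith, ?_⟩
  nlinarith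

end Envelope

theorem IsCritPtReal.isCritPt_of_le {X : Type*} [MetricSpace X] {f : X → ℝ≥0∞} {g : X → ℝ}
    {α : ℝ} {x : X} (hcrit : IsCritPtReal g α x) (hα : 0 ≤ α)
    (hgf : ∀ y, ENNReal.ofReal (g y) ≤ f y) (hfx : f x = ENNReal.ofReal (g x)) (hgx : 0 ≤ g x) :
    IsCritPt f α x := by
  refine ⟨hfx ▸ ENNReal.ofReal_ne_top, fun y hy => hcrit y ?_⟩
  rw [← ENNReal.ofReal_le_ofReal_iff hgx, ← hfx]
  exact (ofReal_add_mul_dist_le hgf hα x y).trans hy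

theorem envelope_critical_point_general {X : Type*} [MetricSpace X]
    (α β : ℝ) (hα : 0 < α) (hαβ : α < β)
    (f : X → ℝ≥0∞) (hf : LowerSemicontinuous f)
    (g : X → ℝ) (hg0 : ∀ x, 0 ≤ g x)
    (hginf : ∀ x : X, (⨅ y : X, f y + ENNReal.ofReal β * edist x y) = ENNReal.ofReal (g x))
    (x : X) (hcrit : IsCritPtReal g α x) :
    f x = ENNReal.ofReal (g x) ∧ IsCritPt f α x := by
  have hgf : ∀ y, ENNReal.ofReal (g y) ≤ f y := fun y =>
    hginf y ▸ iInf_add_mul_edist_le_self f _ y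
  have hfx : f x = ENNReal.ofReal (g x) := by
    refine le_antisymm (not_lt.mp fun hlt => ?_) (hgf x)
    obtain ⟨y, hyx, hy⟩ :=
      hf.exists_ne_add_mul_dist_lt_of_lt (hα.trans hαβ).le hαβ hgf (hg0 x) (hginf x).le hlt
    exact hyx (hcrit y hy.le)
  exact ⟨hfx, hcrit.isCritPt_of_le hα.le hgf hfx (hg0 x)⟩

/-- If `g` is the continuous lower `β`-envelope of a potential `f` and `x*` is an `α`-critical
point of `g` for some `0 < α < β`, then `f x* = g x*` and `x*` is an `α`-critical point of `f`. -/
theorem envelope_critical_point {X : Type*} [MetricSpace X]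
    (α β : ℝ) (hα : 0 < α) (hαβ : α < β)
    (f : X → ℝ≥0∞) (hf : LowerSemicontinuous f) (hsupp : ∃ x, f x ≠ ⊤)
    (g : X → ℝ) (hg : Continuous g) (hg0 : ∀ x, 0 ≤ g x)
    (hginf : ∀ x : X, (⨅ y : X, f y + ENNReal.ofReal β * edist x y) = ENNReal.ofReal (g x))
    (x : X) (hcrit : IsCritPtReal g α x) :
    f x = ENNReal.ofReal (g x) ∧ IsCritPt f α x :=
  envelope_critical_point_general α β hα hαβ f hf g hg0 hginf x hcrit
end

section
/- Let X be a complete separable metric space. Suppose the free variational principle holds on X, i.e., every potential g on X with supp(g) ≠ ∅ has, for every ε > 0, an ε-critical point. Then the localized variational principle holds on X: for every potential f on X, every ε > 0, and every x₀ ∈ supp(f), there is an ε-critical point x* of f with f(x*) + ε·d(x₀, x*) ≤ f(x₀). -/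
open ENNReal

/-! Restrict `f` to the closed set `S = {y | f y + ε d(x₀, y) ≤ f x₀}` by setting it to `∞` off `S`.
An `ε`-critical point `x` of the restricted potential lies in `S`, and every `y` with
`f y + ε d(x, y) ≤ f x` lies in `S` as well, by the triangle inequality; so `x` is an `ε`-critical
point of `f` itself. -/

section Localization

variable {X : Type*}

theorem add_mul_edist_le_trans [PseudoEMetricSpace X] {f : X → ℝ≥0∞} {c : ℝ≥0∞} {x y z : X}
    (hxy : f y + c * edist x y ≤ f x) (hyz : f z + c * edist y z ≤ f y) :
    f z + c * edist x z ≤ f x :=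
  calc f z + c * edist x z ≤ f z + c * (edist x y + edist y z) := by
        gcongr; exact edist_triangle _ _ _
    _ = (f z + c * edist y z) + c * edist x y := by ring
    _ ≤ f y + c * edist x y := by gcongr
    _ ≤ f x := hxy

theorem isClosed_setOf_add_mul_edist_le [PseudoEMetricSpace X] {f : X → ℝ≥0∞}
    (hf : LowerSemicontinuous f) (c : ℝ≥0∞) (x₀ : X) (a : ℝ≥0∞) (hc : c ≠ ⊤) :
    IsClosed {y | f y + c * edist x₀ y ≤ a} :=
  (hf.add ((ENNReal.continuous_const_mul hc).comp
    (continuous_const.edist continuous_id)).lowerSemicontinuous).isClosed_preimage a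

theorem lowerSemicontinuous_add_indicator_compl_top [TopologicalSpace X] {f : X → ℝ≥0∞}
    {S : Set X} (hf : LowerSemicontinuous f) (hS : IsClosed S) :
    LowerSemicontinuous (f + Sᶜ.indicator ⊤ : X → ℝ≥0∞) :=
  hf.add (hS.isOpen_compl.lowerSemicontinuous_indicator zero_le)

theorem add_indicator_compl_top_of_mem {f : X → ℝ≥0∞} {S : Set X} {y : X} (hy : y ∈ S) :
    (f + Sᶜ.indicator ⊤ : X → ℝ≥0∞) y = f y := by
  simp [Set.indicator_of_notMem (Set.notMem_compl_iff.mpr hy)]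

theorem mem_of_add_indicator_compl_top_ne_top {f : X → ℝ≥0∞} {S : Set X} {y : X}
    (hy : (f + Sᶜ.indicator ⊤ : X → ℝ≥0∞) y ≠ ⊤) : y ∈ S := by
  by_contra h
  simp [Set.indicator_of_mem (Set.mem_compl h)] at hy

theorem IsCritPt.of_add_indicator_compl_top [MetricSpace X] {f : X → ℝ≥0∞} {S : Set X}
    {ε : ℝ} {x : X} (hx : IsCritPt (f + Sᶜ.indicator ⊤ : X → ℝ≥0∞) ε x)
    (hS : ∀ y, f y + ENNReal.ofReal ε * edist x y ≤ f x → y ∈ S) : IsCritPt f ε x := by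
  have hxS : x ∈ S := mem_of_add_indicator_compl_top_ne_top hx.1
  refine ⟨by simpa [add_indicator_compl_top_of_mem hxS] using hx.1, fun y hy ↦ hx.2 y ?_⟩
  rwa [add_indicator_compl_top_of_mem hxS, add_indicator_compl_top_of_mem (hS y hy)]

end Localization

theorem FVP_implies_LVP_general {X : Type*} [MetricSpace X]
    (hFVP : ∀ g : X → ℝ≥0∞, LowerSemicontinuous g → (∃ x, g x ≠ ⊤) →
      ∀ ε : ℝ, 0 < ε → ∃ x : X, IsCritPt g ε x) :
    ∀ f : X → ℝ≥0∞, LowerSemicontinuous f → ∀ ε : ℝ, 0 < ε → ∀ x₀ : X, f x₀ ≠ ⊤ →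
      ∃ x : X, IsCritPt f ε x ∧ f x + ENNReal.ofReal ε * edist x₀ x ≤ f x₀ := by
  intro f hf ε hε x₀ hx₀
  set S : Set X := {y | f y + ENNReal.ofReal ε * edist x₀ y ≤ f x₀}
  have hx₀S : x₀ ∈ S := by simp [S]
  obtain ⟨x, hx⟩ := hFVP (f + Sᶜ.indicator ⊤ : X → ℝ≥0∞)
    (lowerSemicontinuous_add_indicator_compl_top hf
      (isClosed_setOf_add_mul_edist_le hf _ x₀ (f x₀) ofReal_ne_top))
    ⟨x₀, by rwa [add_indicator_compl_top_of_mem hx₀S]⟩ ε hε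
  have hxS : x ∈ S := mem_of_add_indicator_compl_top_ne_top hx.1
  exact ⟨x, hx.of_add_indicator_compl_top fun y hy ↦ add_mul_edist_le_trans hxS hy, hxS⟩

/-- On a complete separable metric space, the free variational principle implies the localized
variational principle. -/
theorem FVP_implies_LVP {X : Type*} [MetricSpace X] [CompleteSpace X]
    [TopologicalSpace.SeparableSpace X]
    (hFVP : ∀ g : X → ℝ≥0∞, LowerSemicontinuous g → (∃ x, g x ≠ ⊤) →
      ∀ ε : ℝ, 0 < ε → ∃ x : X, IsCritPt g ε x) :
    ∀ f : X → ℝ≥0∞, LowerSemicontinuous f → ∀ ε : ℝ, 0 < ε → ∀ x₀ : X, f x₀ ≠ ⊤ →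
      ∃ x : X, IsCritPt f ε x ∧ f x + ENNReal.ofReal ε * edist x₀ x ≤ f x₀ :=
  FVP_implies_LVP_general hFVP
end

section
/- Let X and Z be complete metric spaces such that Z is an X-pseudofibration of [0,∞) (the nonnegative reals with the Euclidean metric). Suppose the localized variational principle holds on Z for continuous potentials, i.e., for every continuous g : Z → ℝ with g ≥ 0, every ε > 0, and every z₀ ∈ Z, there is an ε-critical point z* of g with g(z*) + ε·d(z₀, z*) ≤ g(z₀). Then the free variational principle holds on X: every potential f on X with supp(f) ≠ ∅ has, for every ε > 0, an ε-critical point. -/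
open ENNReal
open scoped NNReal

/-- `Z` is an `X`-pseudofibration of `Y` if there are a closed isometry `ι : X × Y → Z`
(with `X × Y` carrying the max metric, the default product metric) and a continuous
`π : Z → Y` which is distance non-increasing and satisfies `π (ι (x, y)) = y`. -/
def IsPseudofibration (X Y Z : Type*) [MetricSpace X] [MetricSpace Y] [MetricSpace Z] : Prop :=
  ∃ (ι : X × Y → Z) (π : Z → Y),
    Isometry ι ∧ IsClosed (Set.range ι) ∧ Continuous π ∧
      (∀ z z' : Z, dist (π z) (π z') ≤ dist z z') ∧ ∀ (x : X) (y : Y), π (ι (x, y)) = y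

/-!
Lift the problem to the closed epigraph `E = {(x, t) | f x ≤ t}` of `f`, embedded in `Z` by `ι`.
The continuous potential `g z = π z + 2 · d(z, ι E)` agrees with the height `t` on `ι E`, and for
`ε < 1` (shrinking `ε` only strengthens criticality) the penalty term forces every `ε`-critical
point of `g` to lie on `ι E`. There it is an `ε`-critical point of the height on `E`, and such a
point `(x, t)` sits on the graph, `t = f x`, with `x` an `ε`-critical point of `f`.
-/

open Metric

section Penalization

variable {Z : Type*} [MetricSpace Z]

theorem IsCritPtReal.comp_isometry {P : Type*} [MetricSpace P] {g : Z → ℝ} {ε : ℝ}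
    {ι : P → Z} (hι : Isometry ι) {p : P} (hp : IsCritPtReal g ε (ι p)) :
    IsCritPtReal (g ∘ ι) ε p := fun q hq =>
  hι.injective <| hp (ι q) <| by simpa only [Function.comp_apply, hι.dist_eq] using hq

theorem mem_of_isCritPtReal_add_two_infDist {h : Z → ℝ} (hh : LipschitzWith 1 h) {C : Set Z}
    (hC : IsClosed C) (hCne : C.Nonempty) {ε : ℝ} (hε₀ : 0 ≤ ε) (hε₁ : ε < 1) {z : Z}
    (hz : IsCritPtReal (fun z => h z + 2 * infDist z C) ε z) : z ∈ C := by
  by_contra hzC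
  have hD : 0 < infDist z C := (hC.notMem_iff_infDist_pos hCne).mp hzC
  -- `2 / (1 + ε) > 1`, so some `w ∈ C` is closer to `z` than `2 · d(z, C) / (1 + ε)`
  obtain ⟨w, hwC, hzw⟩ : ∃ w ∈ C, dist z w < 2 * infDist z C / (1 + ε) :=
    (infDist_lt_iff hCne).mp <| by
      rw [lt_div_iff₀ (by linarith)]
      nlinarith
  have hzw' : (1 + ε) * dist z w < 2 * infDist z C := by
    rwa [lt_div_iff₀ (by linarith), mul_comm] at hzw
  have hdesc : h w + 2 * infDist w C + ε * dist z w ≤ h z + 2 * infDist z C := by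
    have hlip := hh.le_add_mul w z
    rw [NNReal.coe_one, one_mul, dist_comm] at hlip
    rw [infDist_zero_of_mem hwC]
    linarith
  exact hzC (hz w hdesc ▸ hwC)

end Penalization

section Epigraph

variable {X : Type*} {f : X → ℝ≥0∞}

def nnEpigraph (f : X → ℝ≥0∞) : Set (X × ℝ≥0) := {p | f p.1 ≤ p.2}

theorem mk_toNNReal_mem_nnEpigraph {x : X} (hx : f x ≠ ⊤) :
    (x, (f x).toNNReal) ∈ nnEpigraph f := by
  simp [nnEpigraph, ENNReal.coe_toNNReal hx]

theorem LowerSemicontinuous.isClosed_nnEpigraph [TopologicalSpace X]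
    (hf : LowerSemicontinuous f) : IsClosed (nnEpigraph f) :=
  hf.isClosed_epigraph.preimage (continuous_fst.prodMk (ENNReal.continuous_coe.comp continuous_snd))

variable [MetricSpace X]

theorem dist_prod_nnreal_of_le {x y : X} {s t : ℝ≥0} (hst : s ≤ t) :
    dist (x, t) (y, s) = max (dist x y) (t - s) := by
  rw [Prod.dist_eq, NNReal.dist_eq, abs_of_nonneg (by simpa using hst)]

theorem coe_add_ofReal_mul_edist_le_coe_iff {δ : ℝ} (hδ : 0 ≤ δ) {x y : X} {s t : ℝ≥0} :
    (s : ℝ≥0∞) + ENNReal.ofReal δ * edist x y ≤ t ↔ (s : ℝ) + δ * dist x y ≤ t := by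
  rw [edist_dist, ← ENNReal.ofReal_mul hδ, ← ENNReal.ofReal_coe_nnreal, ← ENNReal.ofReal_coe_nnreal,
    ← ENNReal.ofReal_add s.coe_nonneg (by positivity),
    ENNReal.ofReal_le_ofReal_iff t.coe_nonneg]

variable {ε : ℝ} {p : nnEpigraph f}

theorem eq_of_isCritPtReal_height (hp : IsCritPtReal (fun q : nnEpigraph f => (q.1.2 : ℝ)) ε p)
    (hε₀ : 0 ≤ ε) (hε₁ : ε ≤ 1) {y : X} {s : ℝ≥0} (hys : (y, s) ∈ nnEpigraph f)
    (hs : s ≤ p.1.2) (hd : ε * dist p.1.1 y ≤ p.1.2 - s) : y = p.1.1 ∧ s = p.1.2 := by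
  have hsub : (0 : ℝ) ≤ p.1.2 - s := sub_nonneg.mpr hs
  have := hp ⟨(y, s), hys⟩ <| show (s : ℝ) + ε * dist p.1 (y, s) ≤ p.1.2 by
    rw [dist_prod_nnreal_of_le hs, mul_max_of_nonneg _ _ hε₀]
    linarith [max_le hd (mul_le_of_le_one_left hsub hε₁)]
  simpa [Prod.ext_iff] using congrArg Subtype.val this

theorem coe_height_eq_of_isCritPtReal_height
    (hp : IsCritPtReal (fun q : nnEpigraph f => (q.1.2 : ℝ)) ε p) (hε₀ : 0 ≤ ε) (hε₁ : ε ≤ 1) :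
    (p.1.2 : ℝ≥0∞) = f p.1.1 := by
  have hfin : f p.1.1 ≠ ⊤ := ne_top_of_le_ne_top coe_ne_top p.2
  have hle : (f p.1.1).toNNReal ≤ p.1.2 := by
    rw [← ENNReal.coe_le_coe, ENNReal.coe_toNNReal hfin]
    exact p.2
  have := (eq_of_isCritPtReal_height hp hε₀ hε₁ (mk_toNNReal_mem_nnEpigraph hfin) hle
    (by simpa using hle)).2
  rw [← this, ENNReal.coe_toNNReal hfin]

theorem isCritPt_of_isCritPtReal_height
    (hp : IsCritPtReal (fun q : nnEpigraph f => (q.1.2 : ℝ)) ε p) (hε₀ : 0 ≤ ε) (hε₁ : ε ≤ 1)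
    {δ : ℝ} (hεδ : ε ≤ δ) : IsCritPt f δ p.1.1 := by
  have hgraph := coe_height_eq_of_isCritPtReal_height hp hε₀ hε₁
  refine ⟨hgraph ▸ coe_ne_top, fun y hy => ?_⟩
  have hfin : f y ≠ ⊤ := fun h => by simp [h, ← hgraph] at hy
  rw [← hgraph, ← ENNReal.coe_toNNReal hfin,
    coe_add_ofReal_mul_edist_le_coe_iff (hε₀.trans hεδ)] at hy
  have hd : ε * dist p.1.1 y ≤ δ * dist p.1.1 y := by gcongr
  exact (eq_of_isCritPtReal_height hp hε₀ hε₁ (mk_toNNReal_mem_nnEpigraph hfin)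
    (by exact_mod_cast (show ((f y).toNNReal : ℝ) ≤ p.1.2 by
      linarith [mul_nonneg (hε₀.trans hεδ) (dist_nonneg (x := p.1.1) (y := y))]))
    (by linarith)).1

end Epigraph

theorem LVP_pseudofibration_implies_FVP_general {X Z : Type*}
    [MetricSpace X] [MetricSpace Z]
    (hfib : IsPseudofibration X ℝ≥0 Z)
    (hLVP : ∀ g : Z → ℝ, Continuous g → (∀ z, 0 ≤ g z) →
      ∀ ε : ℝ, 0 < ε → ∀ z₀ : Z,
        ∃ z : Z, IsCritPtReal g ε z ∧ g z + ε * dist z₀ z ≤ g z₀) :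
    ∀ f : X → ℝ≥0∞, LowerSemicontinuous f → (∃ x, f x ≠ ⊤) →
      ∀ ε : ℝ, 0 < ε → ∃ x : X, IsCritPt f ε x := by
  intro f hf ⟨x₀, hx₀⟩ ε hε
  obtain ⟨ι, π, hι, hrange, -, hπ, hπι⟩ := hfib
  set C := ι '' nnEpigraph f
  have hC : IsClosed C :=
    (Topology.IsClosedEmbedding.isClosedMap ⟨hι.isEmbedding, hrange⟩) _ hf.isClosed_nnEpigraph
  have hπ' : LipschitzWith 1 fun z => (π z : ℝ) := .mk_one hπ
  set ε' := min ε (1 / 2)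
  have hε' : 0 < ε' := lt_min hε (by norm_num)
  have hε'₁ : ε' < 1 := (min_le_right _ _).trans_lt (by norm_num)
  obtain ⟨z, hz, -⟩ := hLVP (fun z => (π z : ℝ) + 2 * infDist z C)
    (hπ'.continuous.add (continuous_const.mul (continuous_infDist_pt C)))
    (fun z => add_nonneg (π z).coe_nonneg (mul_nonneg zero_le_two infDist_nonneg)) ε' hε' (ι (x₀, 0))
  obtain ⟨p, hp, rfl⟩ := mem_of_isCritPtReal_add_two_infDist hπ' hC
    ⟨_, Set.mem_image_of_mem ι (mk_toNNReal_mem_nnEpigraph hx₀)⟩ hε'.le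
    hε'₁ hz
  have hheight : IsCritPtReal (fun q : nnEpigraph f => (q.1.2 : ℝ)) ε' ⟨p, hp⟩ := by
    convert (hz.comp_isometry (hι.comp isometry_subtype_coe) (p := ⟨p, hp⟩)) using 2 with q
    simp [hπι, infDist_zero_of_mem (Set.mem_image_of_mem ι q.2), C]
  exact ⟨p.1, isCritPt_of_isCritPtReal_height hheight hε'.le hε'₁.le (min_le_left _ _)⟩

/-- If `Z` is an `X`-pseudofibration of `[0,∞)` and the localized variational principle holds
on `Z` for continuous potentials, then the free variational principle holds on `X`. -/
theorem LVP_pseudofibration_implies_FVP {X Z : Type*}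
    [MetricSpace X] [CompleteSpace X] [MetricSpace Z] [CompleteSpace Z]
    (hfib : IsPseudofibration X ℝ≥0 Z)
    (hLVP : ∀ g : Z → ℝ, Continuous g → (∀ z, 0 ≤ g z) →
      ∀ ε : ℝ, 0 < ε → ∀ z₀ : Z,
        ∃ z : Z, IsCritPtReal g ε z ∧ g z + ε * dist z₀ z ≤ g z₀) :
    ∀ f : X → ℝ≥0∞, LowerSemicontinuous f → (∃ x, f x ≠ ⊤) →
      ∀ ε : ℝ, 0 < ε → ∃ x : X, IsCritPt f ε x :=
  LVP_pseudofibration_implies_FVP_general hfib hLVP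
end

section
/- Let X be a complete separable metric space that admits a closed isometry into C([0,1]), and let Y ⊆ ℝ be a closed interval containing more than one point (i.e., Y = [a,b] with a < b reals, or Y = [a,∞), or Y = (−∞,b], or Y = ℝ, each with the Euclidean metric). Then C([0,1]) is an X-pseudofibration of Y: there exist a closed isometry ι : X × Y → C([0,1]) (X × Y carrying the max metric) and a continuous map π : C([0,1]) → Y such that d(π(g), π(h)) ≤ d(g, h) for all g, h ∈ C([0,1]) and π(ι(x, y)) = y for all (x, y) ∈ X × Y. -/
/-!
Prepending to `f ∈ C([0,1])` the segment from `y ∈ ℝ` to `f 0` gives an isometry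
`C([0,1]) × ℝ → C([0,1])`: on the segment the difference of two such paths is a convex
combination of `y - z` and a value of `f - g`, while the value at `0` and the second half
recover `y` and `f`. Composing with `j × ((↑) : Y → ℝ)` gives `ι`, whose range is closed
because `X × Y` is complete, and `π` is evaluation at `0` followed by the `1`-Lipschitz
retraction of `ℝ` onto `Y`.
-/

open ENNReal

open Set unitInterval

noncomputable def segmentWeight (t : I) : ℝ := max 0 (1 - 2 * (t : ℝ))

noncomputable def secondHalfReparam (t : I) : I := projIcc 0 1 zero_le_one (2 * (t : ℝ) - 1)

@[fun_prop]
lemma continuous_segmentWeight : Continuous segmentWeight :=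
  continuous_const.max (by fun_prop)

@[fun_prop]
lemma continuous_secondHalfReparam : Continuous secondHalfReparam :=
  continuous_projIcc.comp (by fun_prop)

lemma segmentWeight_mem_unitInterval (t : I) : segmentWeight t ∈ I :=
  ⟨le_max_left _ _, max_le zero_le_one (by linarith [t.2.1])⟩

lemma exists_segmentWeight_eq_zero_secondHalfReparam_eq (s : I) :
    ∃ t : I, segmentWeight t = 0 ∧ secondHalfReparam t = s := by
  refine ⟨⟨((s : ℝ) + 1) / 2, by constructor <;> linarith [s.2.1, s.2.2]⟩, ?_, ?_⟩
  · exact max_eq_left (show 1 - 2 * (((s : ℝ) + 1) / 2) ≤ 0 by linarith [s.2.1])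
  · simp only [secondHalfReparam, show 2 * (((s : ℝ) + 1) / 2) - 1 = s by ring]
    exact projIcc_val zero_le_one s

/-- The path running linearly from `y` to `f 0` on `[0, 1/2]`, then along `f` at double speed. -/
noncomputable def prependSegment (f : C(I, ℝ)) (y : ℝ) : C(I, ℝ) where
  toFun t := segmentWeight t * y + (1 - segmentWeight t) * f (secondHalfReparam t)

lemma prependSegment_apply (f : C(I, ℝ)) (y : ℝ) (t : I) :
    prependSegment f y t = segmentWeight t * y + (1 - segmentWeight t) * f (secondHalfReparam t) :=
  rfl

lemma prependSegment_apply_zero (f : C(I, ℝ)) (y : ℝ) : prependSegment f y 0 = y := by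
  simp [prependSegment_apply, segmentWeight]

lemma dist_prependSegment (f g : C(I, ℝ)) (y z : ℝ) :
    dist (prependSegment f y) (prependSegment g z) = max (dist f g) (dist y z) := by
  apply le_antisymm
  · refine (ContinuousMap.dist_le (le_max_of_le_left dist_nonneg)).2 fun t => ?_
    obtain ⟨hw₀, hw₁⟩ := segmentWeight_mem_unitInterval t
    set w := segmentWeight t
    set s := secondHalfReparam t
    have hdiff :
        prependSegment f y t - prependSegment g z t = w * (y - z) + (1 - w) * (f s - g s) := by
      rw [prependSegment_apply, prependSegment_apply]; ring
    have hyz : y - z ∈ Metric.closedBall 0 (max (dist f g) (dist y z)) := by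
      simp [← Real.dist_eq]
    have hfg : f s - g s ∈ Metric.closedBall 0 (max (dist f g) (dist y z)) := by
      simpa [← Real.dist_eq] using (ContinuousMap.dist_apply_le_dist s).trans (le_max_left _ _)
    simpa [Real.dist_eq, hdiff] using
      convex_closedBall (0 : ℝ) _ hyz hfg hw₀ (sub_nonneg.2 hw₁) (by ring)
  · refine max_le ((ContinuousMap.dist_le dist_nonneg).2 fun s => ?_) ?_
    · obtain ⟨t, hw, hs⟩ := exists_segmentWeight_eq_zero_secondHalfReparam_eq s
      simpa [prependSegment_apply, hw, hs] using
        ContinuousMap.dist_apply_le_dist (f := prependSegment f y) (g := prependSegment g z) t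
    · simpa [prependSegment_apply_zero] using
        ContinuousMap.dist_apply_le_dist (f := prependSegment f y) (g := prependSegment g z) 0

lemma isometry_prependSegment : Isometry fun p : C(I, ℝ) × ℝ => prependSegment p.1 p.2 :=
  Isometry.of_dist_eq fun p q => by rw [dist_prependSegment, Prod.dist_eq]

lemma ContinuousMap.lipschitzWith_one_eval {α β : Type*} [TopologicalSpace α] [CompactSpace α]
    [PseudoMetricSpace β] (t : α) : LipschitzWith 1 fun f : C(α, β) => f t :=
  LipschitzWith.of_dist_le_mul fun f g => by simpa using ContinuousMap.dist_apply_le_dist t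

section ClosedInterval

variable {Y : Set ℝ}

lemma isClosed_of_closedInterval
    (hY : (∃ a b : ℝ, a < b ∧ Y = Icc a b) ∨ (∃ a : ℝ, Y = Ici a) ∨
      (∃ b : ℝ, Y = Iic b) ∨ Y = univ) : IsClosed Y := by
  rcases hY with ⟨a, b, -, rfl⟩ | ⟨a, rfl⟩ | ⟨b, rfl⟩ | rfl
  exacts [isClosed_Icc, isClosed_Ici, isClosed_Iic, isClosed_univ]

lemma exists_lipschitzWith_one_retraction_of_closedInterval
    (hY : (∃ a b : ℝ, a < b ∧ Y = Icc a b) ∨ (∃ a : ℝ, Y = Ici a) ∨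
      (∃ b : ℝ, Y = Iic b) ∨ Y = univ) :
    ∃ r : ℝ → Y, LipschitzWith 1 r ∧ ∀ y : Y, r y = y := by
  rcases hY with ⟨a, b, hab, rfl⟩ | ⟨a, rfl⟩ | ⟨b, rfl⟩ | rfl
  · exact ⟨projIcc a b hab.le, LipschitzWith.projIcc hab.le, projIcc_val hab.le⟩
  · exact ⟨projIci a, (LipschitzWith.id.const_max a).subtype_mk _, projIci_coe⟩
  · exact ⟨projIic b, (LipschitzWith.id.const_min b).subtype_mk _, projIic_coe⟩
  · exact ⟨fun t => ⟨t, mem_univ t⟩, LipschitzWith.id.subtype_mk _, fun _ => rfl⟩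

end ClosedInterval

theorem C01_isPseudofibration_general {X : Type*} [MetricSpace X] [CompleteSpace X]
    (hembed : ∃ j : X → C(unitInterval, ℝ), Isometry j ∧ IsClosed (Set.range j))
    (Y : Set ℝ)
    (hY : (∃ a b : ℝ, a < b ∧ Y = Set.Icc a b) ∨ (∃ a : ℝ, Y = Set.Ici a) ∨
      (∃ b : ℝ, Y = Set.Iic b) ∨ Y = Set.univ) :
    IsPseudofibration X Y C(unitInterval, ℝ) := by
  obtain ⟨j, hj, -⟩ := hembed
  obtain ⟨r, hr, hr_retract⟩ := exists_lipschitzWith_one_retraction_of_closedInterval hY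
  have : CompleteSpace Y := (isClosed_of_closedInterval hY).completeSpace_coe
  let ι : X × Y → C(I, ℝ) := (fun p => prependSegment p.1 p.2) ∘ Prod.map j (↑)
  have hι : Isometry ι := isometry_prependSegment.comp (hj.prodMap isometry_subtype_coe)
  have hπ : LipschitzWith 1 fun g : C(I, ℝ) => r (g 0) :=
    mul_one (1 : NNReal) ▸ hr.comp (ContinuousMap.lipschitzWith_one_eval 0)
  refine ⟨ι, fun g => r (g 0), hι, hι.isClosedEmbedding.isClosed_range, hπ.continuous,
    fun g h => by simpa using hπ.dist_le_mul g h, fun x y => ?_⟩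
  simp only [ι, Function.comp_apply, Prod.map_apply, prependSegment_apply_zero, hr_retract]

/-- If a complete separable metric space `X` admits a closed isometry into `C([0,1])` and
`Y ⊆ ℝ` is a closed interval with more than one point, then `C([0,1])` (with the supremum
metric) is an `X`-pseudofibration of `Y`. -/
theorem C01_isPseudofibration {X : Type*} [MetricSpace X] [CompleteSpace X]
    [TopologicalSpace.SeparableSpace X]
    (hembed : ∃ j : X → C(unitInterval, ℝ), Isometry j ∧ IsClosed (Set.range j))
    (Y : Set ℝ)
    (hY : (∃ a b : ℝ, a < b ∧ Y = Set.Icc a b) ∨ (∃ a : ℝ, Y = Set.Ici a) ∨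
      (∃ b : ℝ, Y = Set.Iic b) ∨ Y = Set.univ) :
    IsPseudofibration X Y C(unitInterval, ℝ) :=
  C01_isPseudofibration_general hembed Y hY
end
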